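/- arXiv:math/0612789 — 3 statements merged into one kernel-verified Lean document; each statement's English description precedes it below -/
import Mathlib

section
/- Under monotonicity and the exclusion restrictions for always-takers and never-takers, the intention-to-treat effect on the mean outcome equals the proportion of compliers times the average causal effect of assignment among compliers (the CACE decomposition). -/
theorem cace_decomposition {U : Type*} [Fintype U] [Nonempty U]
    (D : U → Bool → Bool) (Y : U → Bool → ℝ)
    (mono : ∀ u, ¬ (D u true = false ∧ D u false = true))
    (excl : ∀ u, D u true = D u false → Y u true = Y u false)
    (hC : (Finset.univ.filter (fun u => D u true = true ∧ D u false = false)).Nonempty) :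
    (1 / (Fintype.card U : ℝ)) * ∑ u : U, (Y u true - Y u false)
      = (((Finset.univ.filter (fun u => D u true = true ∧ D u false = false)).card : ℝ)
            / (Fintype.card U : ℝ))
        * ((∑ u ∈ Finset.univ.filter (fun u => D u true = true ∧ D u false = false),
              (Y u true - Y u false))
            / ((Finset.univ.filter (fun u => D u true = true ∧ D u false = false)).card : ℝ)) := by
  set C := Finset.univ.filter (fun u => D u true = true ∧ D u false = false) with hCdef
  have hsum : ∑ u : U, (Y u true - Y u false) = ∑ u ∈ C, (Y u true - Y u false) := by
    rw [hCdef]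
    rw [eq_comm, ← Finset.sum_filter_add_sum_filter_not Finset.univ
      (fun u => D u true = true ∧ D u false = false), left_eq_add]
    apply Finset.sum_eq_zero
    intro u hu
    simp only [Finset.mem_filter] at hu
    have h : D u true = D u false := by
      have := mono u
      rcases hu with ⟨_, hu2⟩
      cases h1 : D u true <;> cases h2 : D u false <;> simp_all
    rw [excl u h]; ring
  have hc : (C.card : ℝ) ≠ 0 := by
    exact_mod_cast Finset.card_ne_zero_of_mem hC.choose_spec
  have hn : (Fintype.card U : ℝ) ≠ 0 := by
    exact_mod_cast Fintype.card_ne_zero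
  rw [hsum]
  field_simp
end

section
/- Under monotonicity and the exclusion restrictions, if the ITT effect is nonzero, then there exists at least one complier, and CACE = ITT / (proportion of compliers). -/
theorem cace_from_itt {U : Type*} [Fintype U] [Nonempty U]
    (D : U → Bool → Bool) (Y : U → Bool → ℝ)
    (mono : ∀ u, ¬ (D u true = false ∧ D u false = true))
    (excl : ∀ u, D u true = D u false → Y u true = Y u false)
    (hITT : (1 / (Fintype.card U : ℝ)) * ∑ u : U, (Y u true - Y u false) ≠ 0) :
    (Finset.univ.filter (fun u => D u true = true ∧ D u false = false)).Nonempty ∧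
    (∑ u ∈ Finset.univ.filter (fun u => D u true = true ∧ D u false = false),
        (Y u true - Y u false))
      / ((Finset.univ.filter (fun u => D u true = true ∧ D u false = false)).card : ℝ)
    = ((1 / (Fintype.card U : ℝ)) * ∑ u : U, (Y u true - Y u false))
      / (((Finset.univ.filter (fun u => D u true = true ∧ D u false = false)).card : ℝ)
          / (Fintype.card U : ℝ)) := by
  set C := Finset.univ.filter (fun u => D u true = true ∧ D u false = false) with hC
  have hsum : ∑ u : U, (Y u true - Y u false) = ∑ u ∈ C, (Y u true - Y u false) := by
    rw [hC]
    rw [← Finset.sum_filter_add_sum_filter_not Finset.univ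
      (fun u => D u true = true ∧ D u false = false)]
    have : ∑ u ∈ Finset.univ.filter
        (fun u => ¬(D u true = true ∧ D u false = false)), (Y u true - Y u false) = 0 := by
      apply Finset.sum_eq_zero
      intro u hu
      simp only [Finset.mem_filter] at hu
      have heq : D u true = D u false := by
        have := mono u
        rcases Bool.eq_false_or_eq_true (D u true) with h1 | h1 <;>
        rcases Bool.eq_false_or_eq_true (D u false) with h2 | h2 <;>
        simp_all
      rw [excl u heq]; ring
    rw [this, add_zero]
  have hS : ∑ u ∈ C, (Y u true - Y u false) ≠ 0 := by
    intro h; apply hITT; rw [hsum, h, mul_zero]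
  have hne : C.Nonempty := by
    by_contra h
    rw [Finset.not_nonempty_iff_eq_empty] at h
    simp [h] at hS
  refine ⟨hne, ?_⟩
  have hc : (C.card : ℝ) ≠ 0 := by
    simp [Finset.card_ne_zero_of_mem hne.choose_spec]
  have hn : (Fintype.card U : ℝ) ≠ 0 := by
    simp [Fintype.card_ne_zero]
  rw [hsum]
  field_simp
end

section
/- Assigning the worst possible score to deaths can reverse treatment comparisons of means among survivors: there exists a finite population with survival indicators and QOL outcomes such that the mean QOL among survivors is higher under treatment than control, yet after imputing a fixed value c below all QOL scores for deaths, the overall mean under treatment is lower than under control. -/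
theorem imputation_can_reverse :
    ∃ (n : ℕ) (S : Fin n → Bool → Bool) (Y : Fin n → Bool → ℝ) (c : ℝ),
      0 < n ∧
      (∀ u z, Y u z > c) ∧
      (Finset.univ.filter (fun u => S u true = true)).Nonempty ∧
      (Finset.univ.filter (fun u => S u false = true)).Nonempty ∧
      ((∑ u ∈ Finset.univ.filter (fun u => S u true = true), Y u true)
          / ((Finset.univ.filter (fun u => S u true = true)).card : ℝ)
        > (∑ u ∈ Finset.univ.filter (fun u => S u false = true), Y u false)
          / ((Finset.univ.filter (fun u => S u false = true)).card : ℝ)) ∧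
      ((1 / (n : ℝ)) * ∑ u : Fin n, (if S u true then Y u true else c)
        < (1 / (n : ℝ)) * ∑ u : Fin n, (if S u false then Y u false else c)) := by
  refine ⟨2, fun u z => (decide (u = 0) || !z), fun _ z => if z then 3 else 2, 0,
    by norm_num, ?_, ?_, ?_, ?_, ?_⟩
  · intro u z; cases z <;> norm_num
  · exact ⟨0, by decide⟩
  · exact ⟨0, by decide⟩
  · have h1 : (Finset.univ.filter (fun u : Fin 2 => ((decide (u = 0) || !true) = true))) = {0} := by decide
    have h2 : (Finset.univ.filter (fun u : Fin 2 => ((decide (u = 0) || !false) = true))) = {0, 1} := by decide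
    rw [h1, h2]
    simp
    norm_num
  · rw [Fin.sum_univ_two, Fin.sum_univ_two]
    norm_num
end
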